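/- No one-layer spiking neural network realizes the ReLU function σ(x) = max(0,x) on [a,b] with a < 0 < b under the consistent encoding scheme (input firing time T_in + x, output value −T_out + t_v with T_in < T_out), but a two-layer spiking neural network realizing σ on [a,b] exists. -/
import Mathlib


/-- `FiresAt w dl θ t τ`: SRM neuron with weights `w`, delays `dl`, threshold `θ`
fires at time `τ` on input firing times `t` (nonempty causal subset with positive
weight sum, arrival/firing order constraints, SRM firing-time formula). -/
def FiresAt {n : ℕ} (w dl : Fin n → ℝ) (θ : ℝ) (t : Fin n → ℝ) (τ : ℝ) : Prop :=
  ∃ S : Finset (Fin n), S.Nonempty ∧ 0 < ∑ i ∈ S, w i ∧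
    (∀ k ∈ S, t k + dl k < τ) ∧ (∀ k ∉ S, τ ≤ t k + dl k) ∧
    τ = (θ + ∑ i ∈ S, w i * (t i + dl i)) / (∑ i ∈ S, w i)

/-- A layered spiking neural network: `L` layers, layer widths `width l`,
synaptic weights `W`, delays `D`, thresholds `Θ`. -/
structure SNN where
  L : ℕ
  width : ℕ → ℕ
  W : ∀ l, Fin (width l) → Fin (width (l+1)) → ℝ
  D : ∀ l, Fin (width l) → Fin (width (l+1)) → ℝ
  Θ : ∀ l, Fin (width (l+1)) → ℝ

/-- Thresholds positive, delays nonnegative. -/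
def SNN.Valid (Φ : SNN) : Prop :=
  (∀ l j, 0 < Φ.Θ l j) ∧ (∀ l i j, 0 ≤ Φ.D l i j)

/-- Spikes propagate through the network: there are layerwise firing times `t`
starting from the input firing times `t0` and ending in the output firing times
`tL`, each neuron firing according to the SRM dynamics. -/
def SNN.Fires (Φ : SNN) (t0 : Fin (Φ.width 0) → ℝ) (tL : Fin (Φ.width Φ.L) → ℝ) : Prop :=
  ∃ t : ∀ l, Fin (Φ.width l) → ℝ, t 0 = t0 ∧ t Φ.L = tL ∧
    ∀ l < Φ.L, ∀ j, FiresAt (fun i => Φ.W l i j) (fun i => Φ.D l i j) (Φ.Θ l j)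
      (t l) (t (l+1) j)

/-- `Φ` realizes the scalar function `f` on `[a,b]^d` with the consistent encoding
scheme: the `d` genuine input neurons fire at `T_in + x_i`, possible auxiliary
input neurons fire at constant times `taux`, and the single output neuron fires
at `T_out + f x`, with `T_in < T_out`. -/
def SNN.Realizes (Φ : SNN) (d : ℕ) (taux : Fin (Φ.width 0) → ℝ)
    (f : (Fin d → ℝ) → ℝ) (a b Tin Tout : ℝ) : Prop :=
  d ≤ Φ.width 0 ∧ Φ.width Φ.L = 1 ∧ Tin < Tout ∧
  ∀ x : Fin d → ℝ, (∀ i, x i ∈ Set.Icc a b) →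
    Φ.Fires (fun i => if h : (i : ℕ) < d then Tin + x ⟨i, h⟩ else taux i)
      (fun _ => Tout + f x)

/-- no one-layer SNN realizes ReLU on `[a,b]` (`a < 0 < b`) under
the consistent encoding scheme, but a two-layer SNN realizing ReLU exists. -/
def reluWidth : ℕ → ℕ
  | 0 => 2 | 1 => 3 | _ => 1

noncomputable def reluNet (a : ℝ) : SNN where
  L := 2
  width := reluWidth
  W := fun l => match l with
    | 0 => ![![1, 1, 0], ![0, 1, 1]]
    | 1 => ![![1], ![-2], ![2]]
    | _ + 2 => fun _ _ => 0
  D := fun l => match l with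
    | 0 => ![![0, 1, 1], ![0, 0, 0]]
    | 1 => ![![0], ![0], ![0]]
    | _ + 2 => fun _ _ => 0
  Θ := fun l => match l with
    | 0 => ![1, 1 - a, 1]
    | 1 => ![1 - 2*a]
    | _ + 2 => fun _ => 1

lemma layer0 (a b : ℝ) (ha : a < 0) (X : ℝ) (hxa : a ≤ X) (hxb : X ≤ b) (j : Fin 3) :
    FiresAt (fun i => ![![(1:ℝ), 1, 0], ![0, 1, 1]] i j)
      (fun i => ![![(0:ℝ), 1, 1], ![0, 0, 0]] i j)
      (![1, 1 - a, 1] j) (![0 + X, a]) (![1 + X, 1 + min X 0 / 2, 1 + a] j) := by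
  fin_cases j
  · -- relay neuron A
    refine ⟨Finset.univ, Finset.univ_nonempty, ?_, ?_, ?_, ?_⟩
    · simp [Fin.sum_univ_two]
    · intro k _
      fin_cases k <;> simp <;> linarith
    · intro k hk
      exact absurd (Finset.mem_univ k) hk
    · simp [Fin.sum_univ_two]
  · -- min neuron B
    rcases lt_or_ge X 0 with hneg | hpos
    · refine ⟨Finset.univ, Finset.univ_nonempty, ?_, ?_, ?_, ?_⟩
      · simp [Fin.sum_univ_two]
      · intro k _
        rw [min_eq_left hneg.le]
        fin_cases k <;> simp <;> linarith
      · intro k hk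
        exact absurd (Finset.mem_univ k) hk
      · rw [min_eq_left hneg.le]
        simp [Fin.sum_univ_two]
        ring
    · refine ⟨{1}, ⟨1, Finset.mem_singleton_self 1⟩, ?_, ?_, ?_, ?_⟩
      · simp
      · intro k hk
        rw [Finset.mem_singleton] at hk
        subst hk
        rw [min_eq_right hpos]
        simp
        linarith
      · intro k hk
        fin_cases k
        · rw [min_eq_right hpos]
          simp
          linarith
        · exact absurd (Finset.mem_singleton_self 1) hk
      · rw [min_eq_right hpos]
        simp
  · -- aux relay neuron C
    refine ⟨{1}, ⟨1, Finset.mem_singleton_self 1⟩, ?_, ?_, ?_, ?_⟩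
    · simp
    · intro k hk
      rw [Finset.mem_singleton] at hk
      subst hk
      simp
    · intro k hk
      fin_cases k
      · simp
        linarith
      · exact absurd (Finset.mem_singleton_self 1) hk
    · simp

lemma layer1 (a b : ℝ) (ha : a < 0) (X : ℝ) (hxa : a ≤ X) (j : Fin 1) :
    FiresAt (fun i => ![![(1:ℝ)], ![-2], ![2]] i j)
      (fun i => ![![(0:ℝ)], ![0], ![0]] i j)
      (![1 - 2*a] j) (![1 + X, 1 + min X 0 / 2, 1 + a]) (2 + max 0 X) := by
  refine ⟨Finset.univ, Finset.univ_nonempty, ?_, ?_, ?_, ?_⟩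
  · simp [Fin.sum_univ_three]
  · intro k _
    have h1 : X ≤ max 0 X := le_max_right 0 X
    have h2 : (0:ℝ) ≤ max 0 X := le_max_left 0 X
    have h3 : min X 0 ≤ 0 := min_le_right X 0
    fin_cases k <;> simp [Matrix.vecHead, Matrix.vecTail] <;> linarith
  · intro k hk
    exact absurd (Finset.mem_univ k) hk
  · have hmm : max 0 X = X - min X 0 := by
      rcases le_total X 0 with h | h
      · rw [max_eq_left h, min_eq_left h]; ring
      · rw [max_eq_right h, min_eq_right h]; ring
    rw [hmm]
    simp [Fin.sum_univ_three]
    ring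

lemma reluNet_valid (a : ℝ) (ha : a < 0) : (reluNet a).Valid := by
  constructor
  · intro l j
    match l with
    | 0 =>
      have h : ∀ j : Fin 3, (0:ℝ) < ![1, 1 - a, 1] j := by
        intro j; fin_cases j <;> simp <;> linarith
      exact h j
    | 1 =>
      have h : ∀ j : Fin 1, (0:ℝ) < ![1 - 2*a] j := by
        intro j; fin_cases j <;> simp <;> linarith
      exact h j
    | (n+2) => exact one_pos
  · intro l i j
    match l with
    | 0 =>
      have h : ∀ (i : Fin 2) (j : Fin 3), (0:ℝ) ≤ ![![0, 1, 1], ![0, 0, 0]] i j := by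
        intro i j; fin_cases i <;> fin_cases j <;> norm_num
      exact h i j
    | 1 =>
      have h : ∀ (i : Fin 3) (j : Fin 1), (0:ℝ) ≤ ![![0], ![0], ![0]] i j := by
        intro i j; fin_cases i <;> fin_cases j <;> norm_num
      exact h i j
    | (n+2) => exact le_refl 0

lemma reluNet_realizes (a b : ℝ) (ha : a < 0) (hb : 0 < b) :
    (reluNet a).Realizes 1 (fun _ => a) (fun x => max 0 (x 0)) a b 0 2 := by
  refine ⟨one_le_two, rfl, by norm_num, ?_⟩
  intro x hx
  have hxa : a ≤ x 0 := (hx 0).1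
  have hxb : x 0 ≤ b := (hx 0).2
  refine ⟨fun l => match l with
    | 0 => ![0 + x 0, a]
    | 1 => ![1 + x 0, 1 + min (x 0) 0 / 2, 1 + a]
    | _ + 2 => fun _ => 2 + max 0 (x 0), ?_, rfl, ?_⟩
  · show (![0 + x 0, a] : Fin 2 → ℝ)
      = fun i : Fin 2 => if h : (i : ℕ) < 1 then 0 + x ⟨i, h⟩ else a
    funext i
    fin_cases i <;> simp
  · intro l hl j
    replace hl : l < 2 := hl
    interval_cases l
    · exact layer0 a b ha (x 0) hxa hxb j
    · exact layer1 a b ha (x 0) hxa j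

lemma relu_aux {n : ℕ} (w dl : Fin n → ℝ) (θ Tin Tout a b : ℝ)
    (t : ℝ → Fin n → ℝ) (i0 : Fin n)
    (ha : a < 0) (hb : 0 < b)
    (ht0 : ∀ x, t x i0 = Tin + x)
    (hti : ∀ x y i, i ≠ i0 → t x i = t y i)
    (key : ∀ x : ℝ, a ≤ x → x ≤ b → FiresAt w dl θ (t x) (Tout + max 0 x)) :
    False := by
  classical
  have key' : ∀ x : ℝ, a ≤ x → x ≤ b → ∃ S : Finset (Fin n), S.Nonempty ∧
      0 < ∑ i ∈ S, w i ∧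
      (∀ k ∈ S, t x k + dl k < Tout + max 0 x) ∧
      (∀ k ∉ S, Tout + max 0 x ≤ t x k + dl k) ∧
      Tout + max 0 x = (θ + ∑ i ∈ S, w i * (t x i + dl i)) / (∑ i ∈ S, w i) := key
  have diff : ∀ (S : Finset (Fin n)) (x y : ℝ), 0 < (∑ i ∈ S, w i) →
      Tout + max 0 x = (θ + ∑ i ∈ S, w i * (t x i + dl i)) / (∑ i ∈ S, w i) →
      Tout + max 0 y = (θ + ∑ i ∈ S, w i * (t y i + dl i)) / (∑ i ∈ S, w i) →
      (max 0 y - max 0 x) * (∑ i ∈ S, w i) = (if i0 ∈ S then w i0 * (y - x) else 0) := by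
    intro S x y hP hx hy
    rw [eq_div_iff (ne_of_gt hP)] at hx hy
    have hterm : ∀ i ∈ S, w i * (t y i + dl i) - w i * (t x i + dl i)
        = if i = i0 then w i0 * (y - x) else 0 := by
      intro i _
      by_cases h : i = i0
      · subst h
        rw [if_pos rfl, ht0, ht0]
        ring
      · rw [if_neg h, hti y x i h]
        ring
    have hsum : ∑ i ∈ S, w i * (t y i + dl i) - ∑ i ∈ S, w i * (t x i + dl i)
        = if i0 ∈ S then w i0 * (y - x) else 0 := by
      rw [← Finset.sum_sub_distrib, Finset.sum_congr rfl hterm,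
        Finset.sum_ite_eq' S i0 (fun _ => w i0 * (y - x))]
    calc (max 0 y - max 0 x) * (∑ i ∈ S, w i)
        = (Tout + max 0 y) * (∑ i ∈ S, w i) - (Tout + max 0 x) * (∑ i ∈ S, w i) := by ring
      _ = (∑ i ∈ S, w i * (t y i + dl i)) - (∑ i ∈ S, w i * (t x i + dl i)) := by
          rw [hx, hy]; ring
      _ = _ := hsum
  -- positive pair
  haveI : Infinite (Set.Ioo (0:ℝ) b) := Set.Ioo.infinite hb
  have hmem1 : ∀ r : Set.Ioo (0:ℝ) b, 0 < (r:ℝ) := fun r => (Set.mem_Ioo.mp r.2).1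
  have hmem2 : ∀ r : Set.Ioo (0:ℝ) b, (r:ℝ) < b := fun r => (Set.mem_Ioo.mp r.2).2
  obtain ⟨p, q, hpq, hF⟩ := Finite.exists_ne_map_eq_of_infinite
    (fun r : Set.Ioo (0:ℝ) b => (key' r (ha.trans (hmem1 r)).le (hmem2 r).le).choose)
  have hps := (key' (p:ℝ) (ha.trans (hmem1 p)).le (hmem2 p).le).choose_spec
  have hqs := (key' (q:ℝ) (ha.trans (hmem1 q)).le (hmem2 q).le).choose_spec
  rw [← hF] at hqs
  set S := (key' (p:ℝ) (ha.trans (hmem1 p)).le (hmem2 p).le).choose with hS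
  obtain ⟨-, hPp, hmemp, -, heqp⟩ := hps
  obtain ⟨-, -, -, -, heqq⟩ := hqs
  have hmp : max 0 (p:ℝ) = (p:ℝ) := max_eq_right (hmem1 p).le
  have hmq : max 0 (q:ℝ) = (q:ℝ) := max_eq_right (hmem1 q).le
  have hd1 := diff S (p:ℝ) (q:ℝ) hPp heqp heqq
  rw [hmp, hmq] at hd1
  have hne : (q:ℝ) - (p:ℝ) ≠ 0 := sub_ne_zero.mpr (fun h => hpq (Subtype.ext h.symm))
  by_cases hi0 : i0 ∈ S
  swap
  · rw [if_neg hi0] at hd1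
    rcases mul_eq_zero.mp hd1 with h | h
    · exact hne h
    · exact absurd h (ne_of_gt hPp)
  rw [if_pos hi0] at hd1
  have hw0 : (∑ i ∈ S, w i) = w i0 :=
    mul_right_cancel₀ hne (by linear_combination hd1)
  have hw0pos : 0 < w i0 := hw0 ▸ hPp
  have hkey1 : Tin + dl i0 < Tout := by
    have h3 := hmemp i0 hi0
    rw [ht0, hmp] at h3
    linarith
  -- negative pair
  haveI : Infinite (Set.Ioo a (0:ℝ)) := Set.Ioo.infinite ha
  have gmem1 : ∀ r : Set.Ioo a (0:ℝ), a < (r:ℝ) := fun r => (Set.mem_Ioo.mp r.2).1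
  have gmem2 : ∀ r : Set.Ioo a (0:ℝ), (r:ℝ) < 0 := fun r => (Set.mem_Ioo.mp r.2).2
  obtain ⟨u, v, huv, hG⟩ := Finite.exists_ne_map_eq_of_infinite
    (fun r : Set.Ioo a (0:ℝ) => (key' r (gmem1 r).le ((gmem2 r).trans hb).le).choose)
  have hus := (key' (u:ℝ) (gmem1 u).le ((gmem2 u).trans hb).le).choose_spec
  have hvs := (key' (v:ℝ) (gmem1 v).le ((gmem2 v).trans hb).le).choose_spec
  rw [← hG] at hvs
  set T := (key' (u:ℝ) (gmem1 u).le ((gmem2 u).trans hb).le).choose with hT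
  obtain ⟨-, hPu, -, hnmu, hequ⟩ := hus
  obtain ⟨-, -, -, -, heqv⟩ := hvs
  have hmu : max 0 (u:ℝ) = 0 := max_eq_left (gmem2 u).le
  have hmv : max 0 (v:ℝ) = 0 := max_eq_left (gmem2 v).le
  have hd2 := diff T (u:ℝ) (v:ℝ) hPu hequ heqv
  rw [hmu, hmv] at hd2
  by_cases hi0T : i0 ∈ T
  · rw [if_pos hi0T] at hd2
    have huvne : (v:ℝ) - (u:ℝ) ≠ 0 := sub_ne_zero.mpr (fun h => huv (Subtype.ext h.symm))
    rcases mul_eq_zero.mp (show w i0 * ((v:ℝ) - (u:ℝ)) = 0 by linarith) with h | h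
    · linarith
    · exact absurd h huvne
  · have h4 := hnmu i0 hi0T
    rw [ht0, hmu] at h4
    have hu0 := gmem2 u
    linarith

theorem stmt12 (a b : ℝ) (ha : a < 0) (hb : 0 < b) :
    (¬ ∃ (Φ : SNN) (taux : Fin (Φ.width 0) → ℝ) (Tin Tout : ℝ), Φ.L = 1 ∧ Φ.Valid ∧
        Φ.Realizes 1 taux (fun x => max 0 (x 0)) a b Tin Tout) ∧
    (∃ (Φ : SNN) (taux : Fin (Φ.width 0) → ℝ) (Tin Tout : ℝ), Φ.L = 2 ∧ Φ.Valid ∧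
        Φ.Realizes 1 taux (fun x => max 0 (x 0)) a b Tin Tout) := by
  constructor
  · rintro ⟨⟨L, width, W, D, Θ⟩, taux, Tin, Tout, hL, hValid, hReal⟩
    replace hL : L = 1 := hL
    subst hL
    obtain ⟨hd, hw1, hTT, hfire⟩ := hReal
    have hn : 0 < width 0 := hd
    replace hw1 : width 1 = 1 := hw1
    have hj : 0 < width 1 := by omega
    refine relu_aux (fun i => W 0 i ⟨0, hj⟩) (fun i => D 0 i ⟨0, hj⟩) (Θ 0 ⟨0, hj⟩)
      Tin Tout a b (fun x i => if h : (i : ℕ) < 1 then Tin + x else taux i) ⟨0, hn⟩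
      ha hb (fun x => rfl) ?_ ?_
    · intro x y i hi
      have h0 : ¬((i : ℕ) < 1) := by
        intro h
        exact hi (Fin.ext (by simpa using Nat.lt_one_iff.mp h))
      simp only [dif_neg h0]
    · intro x h1 h2
      obtain ⟨t, ht0, htL, hstep⟩ := hfire (fun _ => x) (fun i => Set.mem_Icc.mpr ⟨h1, h2⟩)
      have h := hstep 0 Nat.one_pos ⟨0, hj⟩
      have hout : t (0 + 1) ⟨0, hj⟩ = Tout + max 0 x := by
        have h2' : t (0 + 1) = fun _ => Tout + max 0 x := htL
        rw [h2']
      rw [ht0, hout] at h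
      exact h
  · exact ⟨reluNet a, fun _ => a, 0, 2, rfl, reluNet_valid a ha, reluNet_realizes a b ha hb⟩
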